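/- Assume that every family of at most ℵ₁ infinite subsets of ℕ with the strong finite intersection property has an infinite pseudo-intersection (i.e. ℵ₁ < 𝔭). Then every 2-colouring of the edge set of the complete bipartite graph K_{ω,ω₁} admits a monochromatic copy of K_{ω,ω₁}. -/

import Mathlib

/-!
Identify the countable side with `ℕ` and fix a nonprincipal ultrafilter `U` on `ℕ`. For each of
the `ℵ₁` vertices `b` on the other side, the edges at `b` have a `U`-majority colour `u b`, attained
on a set `T b ∈ U`. These sets lie in a common nonprincipal ultrafilter, so they have the strong
finite intersection property, and `ℵ₁ < 𝔭` gives an infinite `P` with every `P \ T b` finite.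
There are only countably many pairs `(u b, P \ T b)`, so one pair `(i, F)` occurs for uncountably
many `b`, i.e. for `ℵ₁` many; then `P \ F` and these `b` span a complete bipartite graph of
colour `i`.
-/

open Cardinal

universe u v

/-- `G` contains a copy of `H`, i.e. a subgraph isomorphic to `H`; equivalently
there is an injective graph homomorphism from `H` into `G`. -/
def ContainsCopy {V : Type u} {W : Type v} (G : SimpleGraph V) (H : SimpleGraph W) : Prop :=
  ∃ f : H →g G, Function.Injective f

/-- The graph formed by the edges of `G` that receive colour `i` under the
edge-colouring `c`. -/
def colourClass {V : Type u} (G : SimpleGraph V) (c : G.edgeSet → Bool) (i : Bool) :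
    SimpleGraph V :=
  SimpleGraph.fromEdgeSet {e : Sym2 V | ∃ h : e ∈ G.edgeSet, c ⟨e, h⟩ = i}

/-- The family `F` of subsets of `ℕ` has the strong finite intersection
property: the intersection of any finitely many members of `F` is infinite. -/
def HasSFIP (F : Set (Set ℕ)) : Prop :=
  ∀ S : Finset (Set ℕ), ↑S ⊆ F → (⋂₀ (↑S : Set (Set ℕ))).Infinite

open Filter

def AlephOneLtPseudoIntersectionNumber : Prop :=
  ∀ F : Set (Set ℕ), (∀ A ∈ F, A.Infinite) → #F ≤ ℵ₁ → HasSFIP F →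
    ∃ P : Set ℕ, P.Infinite ∧ ∀ A ∈ F, (P \ A).Finite

theorem colourClass_adj {V : Type*} {G : SimpleGraph V} {c : G.edgeSet → Bool} {i : Bool}
    {v w : V} : (colourClass G c i).Adj v w ↔ ∃ h : G.Adj v w, c ⟨s(v, w), h⟩ = i := by
  rw [colourClass, SimpleGraph.fromEdgeSet_adj]
  exact ⟨fun ⟨⟨h, hc⟩, _⟩ => ⟨h, hc⟩, fun ⟨h, hc⟩ => ⟨⟨h, hc⟩, h.ne⟩⟩

theorem containsCopy_completeBipartiteGraph {V α β : Type*} {G : SimpleGraph V} (f : α ↪ V)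
    (g : β ↪ V) (hfg : ∀ a b, G.Adj (f a) (g b)) :
    ContainsCopy G (completeBipartiteGraph α β) := by
  refine ⟨⟨Sum.elim f g, ?_⟩, f.injective.sumElim g.injective fun a b => (hfg a b).ne⟩
  rintro (a | b) (a' | b') h <;> simp only [completeBipartiteGraph_adj] at h <;> simp at h ⊢
  · exact hfg a b'
  · exact (hfg a' b).symm

theorem hasSFIP_of_forall_mem_hyperfilter {F : Set (Set ℕ)} (hF : ∀ A ∈ F, A ∈ hyperfilter ℕ) :
    HasSFIP F := fun S hS hfin =>
  notMem_hyperfilter_of_finite hfin <| (sInter_mem S.finite_toSet).2 fun A hA => hF A (hS hA)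

theorem exists_pseudoIntersection_of_forall_mem_hyperfilter
    (hp : AlephOneLtPseudoIntersectionNumber) {ι : Type*} (hι : #ι ≤ ℵ₁) (T : ι → Set ℕ)
    (hT : ∀ j, T j ∈ hyperfilter ℕ) : ∃ P : Set ℕ, P.Infinite ∧ ∀ j, (P \ T j).Finite := by
  have hrange : ∀ A ∈ Set.range T, A ∈ hyperfilter ℕ := by
    rintro _ ⟨j, rfl⟩
    exact hT j
  obtain ⟨P, hP, hPT⟩ := hp (Set.range T)
    (fun A hA hfin => notMem_hyperfilter_of_finite hfin (hrange A hA))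
    (lift_le.1 <| mk_range_le_lift.trans <| by simpa using hι)
    (hasSFIP_of_forall_mem_hyperfilter hrange)
  exact ⟨P, hP, fun j => hPT _ ⟨j, rfl⟩⟩

theorem exists_infinite_subset_uncountable_fiber {α ι C : Type u} [Countable α] [Uncountable ι]
    [Countable C] {P : Set α} (hP : P.Infinite) (T : ι → Set α) (hT : ∀ j, (P \ T j).Finite)
    (u : ι → C) : ∃ i, ∃ Q ⊆ P, Q.Infinite ∧ Uncountable {j | u j = i ∧ Q ⊆ T j} := by
  classical
  let key : ι → C × Finset α := fun j => (u j, (hT j).toFinset)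
  have hkey : #(C × Finset α) < #ι := mk_le_aleph0.trans_lt (aleph0_lt_mk_iff.2 ‹_›)
  obtain ⟨⟨i, F⟩, hfiber⟩ := exists_uncountable_fiber key hkey
  refine ⟨i, P \ F, Set.sdiff_subset, hP.sdiff F.finite_toSet, ?_⟩
  have hsub : key ⁻¹' {(i, F)} ⊆ {j | u j = i ∧ P \ F ⊆ T j} := by
    rintro j hj
    simp only [Set.mem_preimage, Set.mem_singleton_iff, Prod.mk.injEq, key] at hj
    refine ⟨hj.1, fun n hn => by_contra fun hnT => hn.2 ?_⟩
    rw [← hj.2, Set.Finite.coe_toFinset]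
    exact ⟨hn.1, hnT⟩
  exact (Set.inclusion_injective hsub).uncountable

theorem exists_infinite_uncountable_monochromatic (hp : AlephOneLtPseudoIntersectionNumber)
    {B : Type} (hB : #B = ℵ₁) (χ : ℕ → B → Bool) :
    ∃ (i : Bool) (Q : Set ℕ) (S : Set B), Q.Infinite ∧ Uncountable S ∧
      ∀ n ∈ Q, ∀ b ∈ S, χ n b = i := by
  have : Uncountable B := aleph0_lt_mk_iff.1 (hB ▸ aleph0_lt_aleph_one)
  have hmajority : ∀ b, ∃ i, ∀ᶠ n in hyperfilter ℕ, χ n b = i := fun b =>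
    (Ultrafilter.em _ fun n => χ n b = true).elim (⟨true, ·⟩) fun h => ⟨false, by simpa using h⟩
  choose u hu using hmajority
  obtain ⟨P, hP, hPT⟩ := exists_pseudoIntersection_of_forall_mem_hyperfilter hp hB.le _ hu
  obtain ⟨i, Q, -, hQ, hS⟩ := exists_infinite_subset_uncountable_fiber hP _ hPT u
  exact ⟨i, Q, _, hQ, hS, fun n hn b ⟨hb, hQb⟩ => hb ▸ hQb hn⟩

/-- Assume every family of at most `ℵ₁` infinite subsets of `ℕ`
with the strong finite intersection property has an infinite
pseudo-intersection (i.e. `ℵ₁ < 𝔭`).  Then every `2`-colouring of the edge set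
of the complete bipartite graph `K_{ω,ω₁}` admits a monochromatic copy of
`K_{ω,ω₁}`. -/
theorem monochromatic_completeBipartite_of_pseudoIntersection
    (hp : ∀ F : Set (Set ℕ), (∀ A ∈ F, A.Infinite) → #F ≤ Cardinal.aleph 1 → HasSFIP F →
      ∃ P : Set ℕ, P.Infinite ∧ ∀ A ∈ F, (P \ A).Finite)
    (A B : Type) (hA : #A = ℵ₀) (hB : #B = Cardinal.aleph 1)
    (c : (completeBipartiteGraph A B).edgeSet → Bool) :
    ∃ i : Bool,
      ContainsCopy (colourClass (completeBipartiteGraph A B) c i)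
        (completeBipartiteGraph A B) := by
  obtain ⟨e⟩ : Nonempty (ℕ ≃ A) := Cardinal.eq.1 (by rw [mk_nat, hA])
  let χ : ℕ → B → Bool := fun n b => c ⟨s(.inl (e n), .inr b), by simp⟩
  obtain ⟨i, Q, S, hQ, hS, hχ⟩ := exists_infinite_uncountable_monochromatic hp hB χ
  have : Infinite Q := hQ.to_subtype
  obtain ⟨f⟩ : Nonempty (A ↪ Q) := (le_def _ _).1 (hA ▸ aleph0_le_mk Q)
  obtain ⟨g⟩ : Nonempty (B ↪ S) := (le_def _ _).1 (hB ▸ aleph_one_le_iff.2 aleph0_lt_mk)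
  refine ⟨i, containsCopy_completeBipartiteGraph
    (((f.trans (.subtype _)).trans e.toEmbedding).trans .inl) ((g.trans (.subtype _)).trans .inr)
    fun a b => colourClass_adj.2 ⟨by simp, hχ _ (f a).2 _ (g b).2⟩⟩
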